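/- With the stable-1/2 bridge density f_{tT}(y;z) as above, the first moment is ∫₀^z y f_{tT}(y;z) dy = (t/T) z; in particular a stable-1/2 bridge from 0 to z has expected value (t/T)z at time t. -/

import Mathlib

/-!
Substituting `y = z s² / (1 + s²)` turns `y f_{tT}(y; z) dy` on `(0, z)` into
`(c t (T - t) / (T √(2π))) · 2 √z · exp (-(a s - b / s)²) ds` on `(0, ∞)`, where
`a = c (T - t) / √(2z)` and `b = c t / √(2z)`. By the Cauchy–Schlömilch transformation the
last integral is `√π / (2a)`, independently of `b`: the involution `s ↦ b / (a s)` of `(0, ∞)`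
reverses the sign of `a s - b / s`, so the `a ds` and `b / s² ds` parts of `d(a s - b / s)`
contribute equally and twice `a` times the integral is the Gaussian integral `√π`.
-/

open MeasureTheory Real Set

/-- Marginal density at time `t` of the stable-1/2 bridge from `0` at time `0` to `z` at
time `T`, with activity parameter `c`. -/
noncomputable def stableBridgeDen (c T t z y : ℝ) : ℝ :=
  (1 / Real.sqrt (2 * Real.pi)) * (c * t * (T - t) / T) *
    (Real.exp (-(c ^ 2 * (T * y - t * z) ^ 2) / (2 * y * z * (z - y))) /
      (y - y ^ 2 / z) ^ ((3 : ℝ) / 2))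

section CauchySchlomilch

variable {E : Type*} [NormedAddCommGroup E] [NormedSpace ℝ E] {a b : ℝ}

lemma image_mul_sub_div_Ioi (ha : 0 < a) (hb : 0 < b) :
    (fun s => a * s - b / s) '' Ioi 0 = univ := by
  refine eq_univ_of_forall fun x => ?_
  -- the positive root of `a s² - x s - b = 0`
  obtain ⟨r, hr0, hr⟩ : ∃ r, 0 ≤ r ∧ r ^ 2 = x ^ 2 + 4 * a * b :=
    ⟨_, sqrt_nonneg _, sq_sqrt (by positivity)⟩
  have hxr : 0 < x + r := by nlinarith
  refine ⟨(x + r) / (2 * a), div_pos hxr (by positivity), ?_⟩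
  field_simp
  linear_combination hr

lemma strictMonoOn_mul_sub_div (ha : 0 < a) (hb : 0 < b) :
    StrictMonoOn (fun s => a * s - b / s) (Ioi 0) := fun x hx y _ hxy => by
  have : b / y < b / x := div_lt_div_of_pos_left hb hx hxy
  dsimp only
  nlinarith

lemma hasDerivAt_mul_sub_div {s : ℝ} (hs : s ≠ 0) :
    HasDerivAt (fun s => a * s - b / s) (a + b / s ^ 2) s :=
  (((hasDerivAt_id' s).const_mul a).sub ((hasDerivAt_inv hs).const_mul b)).congr_deriv (by ring)

lemma image_div_Ioi {c : ℝ} (hc : 0 < c) : (fun w => c / w) '' Ioi 0 = Ioi 0 := by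
  ext x
  refine ⟨?_, fun hx => ⟨c / x, div_pos hc hx, by field_simp [(mem_Ioi.mp hx).ne']⟩⟩
  rintro ⟨w, hw, rfl⟩
  exact div_pos hc hw

lemma integral_Ioi_smul_comp_mul_sub_div (g : ℝ → E) (ha : 0 < a) (hb : 0 < b) :
    ∫ s in Ioi 0, (a + b / s ^ 2) • g (a * s - b / s) = ∫ x, g x := by
  conv_rhs => rw [← setIntegral_univ, ← image_mul_sub_div_Ioi ha hb,
    integral_image_eq_integral_abs_deriv_smul measurableSet_Ioi
      (fun s hs => (hasDerivAt_mul_sub_div (ne_of_gt hs)).hasDerivWithinAt)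
      (strictMonoOn_mul_sub_div ha hb).injOn]
  refine setIntegral_congr_fun measurableSet_Ioi fun s (hs : 0 < s) => ?_
  rw [abs_of_pos (by positivity)]

lemma integrableOn_Ioi_smul_comp_mul_sub_div {g : ℝ → E} (hg : Integrable g) (ha : 0 < a)
    (hb : 0 < b) : IntegrableOn (fun s => (a + b / s ^ 2) • g (a * s - b / s)) (Ioi 0) := by
  have hg' : IntegrableOn g ((fun s => a * s - b / s) '' Ioi 0) := by
    rw [image_mul_sub_div_Ioi ha hb]
    exact hg.integrableOn
  refine ((integrableOn_image_iff_integrableOn_abs_deriv_smul measurableSet_Ioi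
    (fun s hs => (hasDerivAt_mul_sub_div (ne_of_gt hs)).hasDerivWithinAt)
    (strictMonoOn_mul_sub_div ha hb).injOn g).mp hg').congr_fun
    (fun s (hs : 0 < s) => ?_) measurableSet_Ioi
  dsimp only
  rw [abs_of_pos (by positivity)]

lemma integrableOn_Ioi_comp_mul_sub_div {g : ℝ → E} (hg : Integrable g) (ha : 0 < a)
    (hb : 0 < b) : IntegrableOn (fun s => g (a * s - b / s)) (Ioi 0) := by
  refine IntegrableOn.congr_fun ((integrableOn_Ioi_smul_comp_mul_sub_div hg ha hb).bdd_smul a⁻¹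
    (φ := fun s => (a + b / s ^ 2)⁻¹) ?_ ?_) (fun s (hs : 0 < s) => ?_) measurableSet_Ioi
  · refine ContinuousOn.aestronglyMeasurable (fun s (hs : 0 < s) => ?_) measurableSet_Ioi
    fun_prop (disch := positivity)
  · refine (ae_restrict_iff' measurableSet_Ioi).mpr (ae_of_all _ fun s (hs : 0 < s) => ?_)
    rw [norm_inv, norm_of_nonneg (by positivity)]
    gcongr
    linarith [div_nonneg hb.le (sq_nonneg s)]
  · simp only [Pi.smul_apply']
    rw [inv_smul_smul₀ (by positivity)]

-- `w ↦ (b / a) / w` is an involution of `Ioi 0` under which `a s - b / s` changes sign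
lemma integral_Ioi_div_sq_smul_comp_mul_sub_div {g : ℝ → E} (hg_even : ∀ x, g (-x) = g x)
    (ha : 0 < a) (hb : 0 < b) :
    ∫ w in Ioi 0, (b / w ^ 2) • g (a * w - b / w) = a • ∫ s in Ioi 0, g (a * s - b / s) := by
  have hc : 0 < b / a := div_pos hb ha
  have hρ' : ∀ w ∈ Ioi (0 : ℝ), HasDerivWithinAt (fun w => b / a / w) (-(b / a / w ^ 2))
      (Ioi 0) w := fun w hw => by
    simpa [div_eq_mul_inv, neg_div] using
      ((hasDerivAt_inv (ne_of_gt hw)).const_mul (b / a)).hasDerivWithinAt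
  have hρ_inj : InjOn (fun w => b / a / w) (Ioi 0) :=
    (show StrictAntiOn (fun w => b / a / w) (Ioi 0) from
      fun x hx _ _ hxy => div_lt_div_of_pos_left hc hx hxy).injOn
  rw [← integral_smul, ← image_div_Ioi hc,
    integral_image_eq_integral_abs_deriv_smul measurableSet_Ioi hρ' hρ_inj, image_div_Ioi hc]
  refine setIntegral_congr_fun measurableSet_Ioi fun w (hw : 0 < w) => ?_
  have hvρ : a * (b / a / w) - b / (b / a / w) = -(a * w - b / w) := by field_simp; ring
  rw [abs_neg, abs_of_pos (by positivity), hvρ, hg_even, smul_smul]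
  congr 1
  field_simp

/-- The Cauchy–Schlömilch transformation. -/
theorem integral_Ioi_comp_mul_sub_div {g : ℝ → E} (hg : Integrable g)
    (hg_even : ∀ x, g (-x) = g x) (ha : 0 < a) (hb : 0 < b) :
    ∫ s in Ioi 0, g (a * s - b / s) = (2 * a)⁻¹ • ∫ x, g x := by
  have hF := integrableOn_Ioi_smul_comp_mul_sub_div hg ha hb
  have hG : IntegrableOn (fun s => a • g (a * s - b / s)) (Ioi 0) :=
    (integrableOn_Ioi_comp_mul_sub_div hg ha hb).smul a
  have hH : IntegrableOn (fun w => (b / w ^ 2) • g (a * w - b / w)) (Ioi 0) :=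
    (hF.sub hG).congr_fun (fun s _ => by
      simp only [Pi.sub_apply, add_smul, add_sub_cancel_left]) measurableSet_Ioi
  have hsplit : ∫ x, g x = a • (∫ s in Ioi 0, g (a * s - b / s)) +
      ∫ w in Ioi 0, (b / w ^ 2) • g (a * w - b / w) := by
    rw [← integral_Ioi_smul_comp_mul_sub_div g ha hb, ← integral_smul, ← integral_add hG hH]
    simp only [add_smul]
  rw [hsplit, integral_Ioi_div_sq_smul_comp_mul_sub_div hg_even ha hb, ← two_smul ℝ, smul_smul,
    smul_smul, show (2 * a)⁻¹ * 2 * a = 1 by field_simp, one_smul]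

theorem integral_Ioi_exp_neg_sq_mul_sub_div (ha : 0 < a) (hb : 0 < b) :
    ∫ s in Ioi 0, exp (-(a * s - b / s) ^ 2) = √π / (2 * a) := by
  rw [integral_Ioi_comp_mul_sub_div (g := fun x => exp (-x ^ 2))
    (by simpa using integrable_exp_neg_mul_sq one_pos) (fun x => by simp) ha hb,
    show ∫ x, exp (-x ^ 2) = √π by simpa using integral_gaussian 1, smul_eq_mul, inv_mul_eq_div]

end CauchySchlomilch

section BridgeSubstitution

variable {z : ℝ}

lemma image_mul_sq_div_one_add_sq_Ioi (hz : 0 < z) :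
    (fun s => z * s ^ 2 / (1 + s ^ 2)) '' Ioi 0 = Ioo 0 z := by
  ext y
  constructor
  · rintro ⟨s, hs, rfl⟩
    have := mem_Ioi.mp hs
    refine ⟨by positivity, ?_⟩
    rw [div_lt_iff₀ (by positivity)]
    linarith
  · rintro ⟨hy, hyz⟩
    have hzy : 0 < z - y := sub_pos.mpr hyz
    refine ⟨√(y / (z - y)), sqrt_pos.mpr (div_pos hy hzy), ?_⟩
    simp only [sq_sqrt (div_pos hy hzy).le]
    field_simp
    ring

lemma strictMonoOn_mul_sq_div_one_add_sq (hz : 0 < z) :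
    StrictMonoOn (fun s => z * s ^ 2 / (1 + s ^ 2)) (Ioi 0) := fun x hx y _ hxy => by
  have := mem_Ioi.mp hx
  dsimp only
  rw [div_lt_div_iff₀ (by positivity) (by positivity)]
  nlinarith [mul_lt_mul_of_pos_left (pow_lt_pow_left₀ hxy this.le two_ne_zero) hz]

lemma hasDerivAt_mul_sq_div_one_add_sq (s : ℝ) :
    HasDerivAt (fun s => z * s ^ 2 / (1 + s ^ 2)) (2 * z * s / (1 + s ^ 2) ^ 2) s := by
  refine (((hasDerivAt_pow 2 s).const_mul z).div ((hasDerivAt_pow 2 s).const_add 1)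
    (by positivity)).congr_deriv ?_
  field_simp
  ring

lemma rpow_three_halves_sq {x : ℝ} (hx : 0 ≤ x) : (x ^ 2) ^ ((3 : ℝ) / 2) = x ^ 3 := by
  rw [← rpow_natCast_mul hx]
  norm_num

lemma deriv_mul_stableBridgeDen_comp (c T t : ℝ) (hz : 0 < z) {s : ℝ} (hs : 0 < s) :
    2 * z * s / (1 + s ^ 2) ^ 2 *
        (z * s ^ 2 / (1 + s ^ 2) * stableBridgeDen c T t z (z * s ^ 2 / (1 + s ^ 2))) =
      (1 / √(2 * π)) * (c * t * (T - t) / T) * (2 * √z) *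
        exp (-(c * (T - t) / √(2 * z) * s - c * t / √(2 * z) / s) ^ 2) := by
  have hz2 : √z ^ 2 = z := sq_sqrt hz.le
  have h2z : √(2 * z) ^ 2 = 2 * z := sq_sqrt (by positivity)
  have hvar : z * s ^ 2 / (1 + s ^ 2) - (z * s ^ 2 / (1 + s ^ 2)) ^ 2 / z =
      (√z * s / (1 + s ^ 2)) ^ 2 := by
    field_simp
    rw [hz2]
    ring
  have hexp : -(c ^ 2 * (T * (z * s ^ 2 / (1 + s ^ 2)) - t * z) ^ 2) /
      (2 * (z * s ^ 2 / (1 + s ^ 2)) * z * (z - z * s ^ 2 / (1 + s ^ 2))) =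
      -(c * (T - t) / √(2 * z) * s - c * t / √(2 * z) / s) ^ 2 := by
    rw [show c * (T - t) / √(2 * z) * s - c * t / √(2 * z) / s =
      (c * (T - t) * s - c * t / s) / √(2 * z) by ring, div_pow, h2z]
    field_simp
    ring
  unfold stableBridgeDen
  rw [hvar, hexp, rpow_three_halves_sq (by positivity)]
  field_simp
  rw [show √z ^ 4 = (√z ^ 2) ^ 2 by ring, hz2]
  ring

end BridgeSubstitution

/-- First moment of the stable-1/2 bridge marginal: the expected value of the bridge
at time `t` is `(t/T) z`. -/
theorem stable_half_bridge_first_moment (c T t z : ℝ)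
    (hc : 0 < c) (ht : 0 < t) (htT : t < T) (hz : 0 < z) :
    (∫ y in Set.Ioo (0 : ℝ) z, y * stableBridgeDen c T t z y) = (t / T) * z := by
  have hT : 0 < T := ht.trans htT
  have hTt : 0 < T - t := sub_pos.mpr htT
  have hφ' : ∀ s ∈ Ioi (0 : ℝ), HasDerivWithinAt (fun s => z * s ^ 2 / (1 + s ^ 2))
      (2 * z * s / (1 + s ^ 2) ^ 2) (Ioi 0) s := fun s _ =>
    (hasDerivAt_mul_sq_div_one_add_sq s).hasDerivWithinAt
  rw [← image_mul_sq_div_one_add_sq_Ioi hz, integral_image_eq_integral_abs_deriv_smul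
    measurableSet_Ioi hφ' (strictMonoOn_mul_sq_div_one_add_sq hz).injOn]
  rw [setIntegral_congr_fun measurableSet_Ioi fun s (hs : 0 < s) => by
    rw [smul_eq_mul, abs_of_pos (by positivity), deriv_mul_stableBridgeDen_comp c T t hz hs]]
  rw [integral_const_mul, integral_Ioi_exp_neg_sq_mul_sub_div (by positivity) (by positivity),
    sqrt_mul zero_le_two, sqrt_mul zero_le_two]
  field_simp
  exact sq_sqrt hz.le
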